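/- arXiv:1711.06604 — 6 statements merged into one kernel-verified Lean document; each statement's English description precedes it below -/
import Mathlib

section
/- For all quaternions a₁, a₂ such that n(a₁) ≠ n(a₂) or t(conj a₂ * a₁) ≠ 0, defining Φ(a,b) = (n(a) * conj a + conj b * a * conj b) / ((n(a) - n(b))^2 + (t(conj b * a))^2), one has Φ(a₁,a₂) * a₁ + Φ(a₂,a₁) * a₂ = 1. -/
open Quaternion

/-- Real-valued trace of a quaternion: `t(x) = x + conj x`. -/
noncomputable def qTrace (x : ℍ[ℝ]) : ℝ := (x + star x).re

/-- Real-valued norm of a quaternion: `n(x) = x * conj x`. -/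
noncomputable def qNorm (x : ℍ[ℝ]) : ℝ := (x * star x).re

/-- `Φ(a,b) = (n(a) conj a + conj b · a · conj b) / ((n(a)-n(b))² + t(conj b · a)²)`. -/
noncomputable def Phi (a b : ℍ[ℝ]) : ℍ[ℝ] :=
  (((qNorm a : ℝ) : ℍ[ℝ]) * star a + star b * a * star b) /
    ((((qNorm a - qNorm b) ^ 2 + (qTrace (star b * a)) ^ 2 : ℝ)) : ℍ[ℝ])

lemma key_ident (a b : ℍ[ℝ]) :
    (((qNorm a : ℝ) : ℍ[ℝ]) * star a + star b * a * star b) * a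
      + (((qNorm b : ℝ) : ℍ[ℝ]) * star b + star a * b * star a) * b
    = ((((qNorm a - qNorm b) ^ 2 + (qTrace (star b * a)) ^ 2 : ℝ)) : ℍ[ℝ]) := by
  ext <;>
    simp only [qNorm, qTrace, Quaternion.re_add, Quaternion.imI_add, Quaternion.imJ_add,
      Quaternion.imK_add, Quaternion.re_mul, Quaternion.imI_mul, Quaternion.imJ_mul,
      Quaternion.imK_mul, Quaternion.re_star, Quaternion.imI_star, Quaternion.imJ_star,
      Quaternion.imK_star, Quaternion.re_coe, Quaternion.imI_coe, Quaternion.imJ_coe,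
      Quaternion.imK_coe] <;>
    ring

/-- `Φ(a₁,a₂) a₁ + Φ(a₂,a₁) a₂ = 1` when `n(a₁) ≠ n(a₂)` or `t(conj a₂ · a₁) ≠ 0`. -/
theorem Phi_mul_add_Phi_mul_eq_one (a₁ a₂ : ℍ[ℝ])
    (h : qNorm a₁ ≠ qNorm a₂ ∨ qTrace (star a₂ * a₁) ≠ 0) :
    Phi a₁ a₂ * a₁ + Phi a₂ a₁ * a₂ = 1 := by
  have hd0 : ((qNorm a₁ - qNorm a₂) ^ 2 + (qTrace (star a₂ * a₁)) ^ 2 : ℝ) ≠ 0 := by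
    rcases h with h | h
    · have : qNorm a₁ - qNorm a₂ ≠ 0 := sub_ne_zero.mpr h
      positivity
    · positivity
  have hdsym : ((qNorm a₂ - qNorm a₁) ^ 2 + (qTrace (star a₁ * a₂)) ^ 2 : ℝ)
      = ((qNorm a₁ - qNorm a₂) ^ 2 + (qTrace (star a₂ * a₁)) ^ 2 : ℝ) := by
    simp [qTrace, Quaternion.re_mul]
    ring
  rw [Phi, Phi, hdsym, div_eq_mul_inv, div_eq_mul_inv, ← Quaternion.coe_inv,
    Quaternion.mul_coe_eq_smul, Quaternion.mul_coe_eq_smul, smul_mul_assoc, smul_mul_assoc,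
    ← smul_add, key_ident a₁ a₂, Quaternion.smul_coe, inv_mul_cancel₀ hd0, Quaternion.coe_one]
end

section
/- For all quaternions a₁, a₂ such that n(a₁) ≠ n(a₂) or t(conj a₂ * a₁) ≠ 0, with Φ(a,b) = (n(a) * conj a + conj b * a * conj b) / ((n(a) - n(b))^2 + (t(conj b * a))^2), one has Φ(a₁,a₂) * a₂ - Φ(a₂,a₁) * a₁ = 0. -/
set_option maxHeartbeats 1000000


open Quaternion

/-- `Φ(a₁,a₂) a₂ - Φ(a₂,a₁) a₁ = 0` when `n(a₁) ≠ n(a₂)` or `t(conj a₂ · a₁) ≠ 0`. -/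
theorem Phi_mul_sub_Phi_mul_eq_zero (a₁ a₂ : ℍ[ℝ])
    (h : qNorm a₁ ≠ qNorm a₂ ∨ qTrace (star a₂ * a₁) ≠ 0) :
    Phi a₁ a₂ * a₂ - Phi a₂ a₁ * a₁ = 0 := by
  have htr : qTrace (star a₁ * a₂) = qTrace (star a₂ * a₁) := by
    simp [qTrace, Quaternion.re_add, Quaternion.re_mul, Quaternion.re_star,
      Quaternion.imI_star, Quaternion.imJ_star, Quaternion.imK_star]
    ring
  have hden : (qNorm a₂ - qNorm a₁) ^ 2 + (qTrace (star a₁ * a₂)) ^ 2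
      = (qNorm a₁ - qNorm a₂) ^ 2 + (qTrace (star a₂ * a₁)) ^ 2 := by
    rw [htr]; ring
  set D : ℝ := (qNorm a₁ - qNorm a₂) ^ 2 + (qTrace (star a₂ * a₁)) ^ 2 with hD
  have hDne : D ≠ 0 := by
    rcases h with h | h
    · have h' : qNorm a₁ - qNorm a₂ ≠ 0 := sub_ne_zero.mpr h
      have : (qNorm a₁ - qNorm a₂) ^ 2 > 0 := by positivity
      have h2 : (qTrace (star a₂ * a₁)) ^ 2 ≥ 0 := sq_nonneg _
      nlinarith
    · have : (qTrace (star a₂ * a₁)) ^ 2 > 0 := by positivity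
      have h2 : (qNorm a₁ - qNorm a₂) ^ 2 ≥ 0 := sq_nonneg _
      nlinarith
  have hDq : ((D : ℝ) : ℍ[ℝ]) ≠ 0 := by
    simpa using (Quaternion.coe_injective.ne hDne)
  have hmul : ∀ (x c : ℍ[ℝ]) (r : ℝ), x / (r : ℍ[ℝ]) * c = x * c / (r : ℍ[ℝ]) := by
    intro x c r
    rw [div_eq_mul_inv, div_eq_mul_inv, mul_assoc, mul_assoc,
      ((Quaternion.coe_commute r c).inv_left₀).eq]
  rw [Phi, Phi, hden, ← hD, hmul, hmul, div_sub_div_same, div_eq_zero_iff]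
  left
  ext <;>
    simp [qNorm, Quaternion.re_mul, Quaternion.imI_mul, Quaternion.imJ_mul,
      Quaternion.imK_mul, Quaternion.re_star, Quaternion.imI_star,
      Quaternion.imJ_star, Quaternion.imK_star, Quaternion.re_coe,
      Quaternion.imI_coe, Quaternion.imJ_coe, Quaternion.imK_coe] <;>
    ring
end

section
/- For a quaternion y, the quadratic polynomial Δ_y(x) = x^2 - x*t(y) + n(y) (with t(y) = y + conj y and n(y) = y * conj y viewed as real scalars) vanishes at x ∈ ℍ if and only if Re(x) = Re(y) and ‖Im(x)‖ = ‖Im(y)‖. -/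
/-!
With `a = Re x`, `r = Re y`, `v = Im x`, one has `x² = a² - ‖v‖² + 2av`, so
`Δ_y(x) = ((a - r)² + ‖Im y‖² - ‖v‖²) + 2(a - r)v` splits into a real and a pure imaginary
part. The imaginary part vanishes iff `a = r` or `v = 0`; in the second case the real part is
a sum of two squares, so again `a = r`, and then `Im y = 0 = v`.
-/

namespace Quaternion

/-- The paper's `Δ_y(x)`. -/
def delta {R : Type*} [CommRing R] (y x : ℍ[R]) : ℍ[R] :=
  x ^ 2 - x * (((y + star y).re : R) : ℍ[R]) + (((y * star y).re : R) : ℍ[R])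

section CommRing

variable {R : Type*} [CommRing R]

theorem delta_eq (y x : ℍ[R]) :
    delta y x = (((x.re - y.re) ^ 2 + normSq y.im - normSq x.im : R) : ℍ[R]) +
      (2 * (x.re - y.re)) • x.im := by
  ext <;> simp [delta, sq, normSq_def'] <;> ring

theorem coe_add_eq_zero_iff {c : R} {p : ℍ[R]} (hp : p.re = 0) :
    (c : ℍ[R]) + p = 0 ↔ c = 0 ∧ p = 0 := by
  refine ⟨fun h => ?_, fun ⟨hc, hp⟩ => by simp [hc, hp]⟩
  have hc : c = 0 := by simpa [hp] using congrArg (·.re) h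
  exact ⟨hc, by simpa [hc] using h⟩

end CommRing

variable {R : Type*} [Field R] [LinearOrder R] [IsStrictOrderedRing R]

theorem delta_eq_zero_iff (y x : ℍ[R]) :
    delta y x = 0 ↔ x.re = y.re ∧ normSq x.im = normSq y.im := by
  rw [delta_eq, coe_add_eq_zero_iff (by simp), smul_eq_zero, mul_eq_zero,
    or_iff_right two_ne_zero]
  refine ⟨fun ⟨hc, hv⟩ => ?_, fun ⟨hre, hn⟩ => ⟨by simp [hre, hn], by simp [hre]⟩⟩
  rcases hv with hre | him
  · rw [sub_eq_zero] at hre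
    have hn : normSq y.im - normSq x.im = 0 := by simpa [hre] using hc
    exact ⟨hre, (sub_eq_zero.mp hn).symm⟩
  · have hsum : (x.re - y.re) ^ 2 + normSq y.im = 0 := by simpa [him] using hc
    obtain ⟨hre, hn⟩ := (add_eq_zero_iff_of_nonneg (sq_nonneg _) normSq_nonneg).mp hsum
    exact ⟨by simpa [sub_eq_zero] using hre, by rw [him, hn, map_zero]⟩

end Quaternion

open Quaternion

/-- The quadratic polynomial `Δ_y(x) = x² - x t(y) + n(y)` vanishes at `x` iff
`Re x = Re y` and `‖Im x‖ = ‖Im y‖`. -/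
theorem Delta_eq_zero_iff (y x : ℍ[ℝ]) :
    x ^ 2 - x * (((y + star y).re : ℝ) : ℍ[ℝ]) + (((y * star y).re : ℝ) : ℍ[ℝ]) = 0 ↔
      x.re = y.re ∧ ‖x.im‖ = ‖y.im‖ := by
  rw [← delta, delta_eq_zero_iff, normSq_eq_norm_mul_self, normSq_eq_norm_mul_self,
    mul_self_inj (norm_nonneg _) (norm_nonneg _)]
end

section
/- Let a₁, a₂ ∈ ℍ, v := a₁ * conj a₂, and suppose Im(v) ≠ 0. Let S = {I ∈ ℍ | I² = -1}. Then the function I ↦ ‖a₁ + I*a₂‖ on S attains its maximum exactly at I = Im(v)/‖Im(v)‖ and its minimum exactly at I = -Im(v)/‖Im(v)‖. -/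
open Quaternion RealInnerProductSpace

lemma imunit_re_norm {I : ℍ[ℝ]} (h : I ^ 2 = -1) : I.re = 0 ∧ ‖I‖ = 1 := by
  have h' := h
  rw [sq] at h'
  have hre : (I * I).re = (-1 : ℍ[ℝ]).re := by rw [h']
  have hi : (I * I).imI = (-1 : ℍ[ℝ]).imI := by rw [h']
  have hj : (I * I).imJ = (-1 : ℍ[ℝ]).imJ := by rw [h']
  have hk : (I * I).imK = (-1 : ℍ[ℝ]).imK := by rw [h']
  simp [Quaternion.re_mul, Quaternion.imI_mul, Quaternion.imJ_mul, Quaternion.imK_mul] at hre hi hj hk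
  have hr0 : I.re = 0 := by
    by_contra hr
    have h1 : I.imI = 0 := by
      have : I.re * I.imI = 0 := by nlinarith
      exact (mul_eq_zero.mp this).resolve_left hr
    have h2 : I.imJ = 0 := by
      have : I.re * I.imJ = 0 := by nlinarith
      exact (mul_eq_zero.mp this).resolve_left hr
    have h3 : I.imK = 0 := by
      have : I.re * I.imK = 0 := by nlinarith
      exact (mul_eq_zero.mp this).resolve_left hr
    nlinarith [sq_nonneg I.re]
  refine ⟨hr0, ?_⟩
  have h4 : ‖I‖ * ‖I‖ = 1 := by
    rw [← Quaternion.normSq_eq_norm_mul_self, Quaternion.normSq_def']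
    nlinarith
  nlinarith [norm_nonneg I]

lemma norm_sq_formula (a₁ a₂ I : ℍ[ℝ]) (hre : I.re = 0) (hn : ‖I‖ = 1) :
    ‖a₁ + I * a₂‖ ^ 2 = ‖a₁‖ ^ 2 + ‖a₂‖ ^ 2 + 2 * ⟪(a₁ * star a₂).im, I⟫ := by
  rw [norm_add_sq_real, norm_mul, hn, one_mul]
  have hstar : star I = -I := by
    ext <;> simp [hre]
  have : ⟪a₁, I * a₂⟫ = ⟪(a₁ * star a₂).im, I⟫ := by
    rw [Quaternion.inner_def, Quaternion.inner_def, StarMul.star_mul, hstar]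
    set v := a₁ * star a₂ with hv
    have hvim : v = (v.re : ℍ[ℝ]) + v.im := (Quaternion.re_add_im v).symm
    calc (a₁ * (star a₂ * -I)).re = (v * -I).re := by rw [← mul_assoc]
      _ = ((v.re : ℍ[ℝ]) * -I).re + (v.im * -I).re := by
          nth_rewrite 1 [hvim]; rw [add_mul, Quaternion.re_add]
      _ = (v.im * -I).re := by simp [Quaternion.coe_mul_eq_smul, hre]
  rw [this]; ring

/-- If `v = a₁ conj a₂` has nonzero imaginary part, then on the sphere of imaginary units
the function `I ↦ ‖a₁ + I a₂‖` attains its maximum exactly at `Im v / ‖Im v‖` and its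
minimum exactly at `-Im v / ‖Im v‖`. -/
theorem max_min_modulus_on_sphere (a₁ a₂ : ℍ[ℝ])
    (hv : (a₁ * star a₂).im ≠ 0) :
    (∀ I : ℍ[ℝ], I ^ 2 = -1 →
        ‖a₁ + I * a₂‖ ≤ ‖a₁ + (‖(a₁ * star a₂).im‖⁻¹ • (a₁ * star a₂).im) * a₂‖ ∧
        (‖a₁ + I * a₂‖ = ‖a₁ + (‖(a₁ * star a₂).im‖⁻¹ • (a₁ * star a₂).im) * a₂‖ →
          I = ‖(a₁ * star a₂).im‖⁻¹ • (a₁ * star a₂).im)) ∧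
    (∀ I : ℍ[ℝ], I ^ 2 = -1 →
        ‖a₁ + (-(‖(a₁ * star a₂).im‖⁻¹ • (a₁ * star a₂).im)) * a₂‖ ≤ ‖a₁ + I * a₂‖ ∧
        (‖a₁ + I * a₂‖ = ‖a₁ + (-(‖(a₁ * star a₂).im‖⁻¹ • (a₁ * star a₂).im)) * a₂‖ →
          I = -(‖(a₁ * star a₂).im‖⁻¹ • (a₁ * star a₂).im))) := by
  set w : ℍ[ℝ] := (a₁ * star a₂).im with hw
  set u : ℍ[ℝ] := ‖w‖⁻¹ • w with hu
  have hwpos : (0:ℝ) < ‖w‖ := norm_pos_iff.mpr hv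
  have hure : u.re = 0 := by simp [hu, hw]
  have hun : ‖u‖ = 1 := by
    rw [hu, norm_smul, norm_inv, norm_norm, inv_mul_cancel₀ hwpos.ne']
  have hinner_u : ⟪w, u⟫ = ‖w‖ := by
    rw [hu, real_inner_smul_right, real_inner_self_eq_norm_sq]
    field_simp
  have hfu : ‖a₁ + u * a₂‖ ^ 2 = ‖a₁‖ ^ 2 + ‖a₂‖ ^ 2 + 2 * ‖w‖ := by
    rw [norm_sq_formula a₁ a₂ u hure hun, hinner_u]
  have hfnu : ‖a₁ + (-u) * a₂‖ ^ 2 = ‖a₁‖ ^ 2 + ‖a₂‖ ^ 2 - 2 * ‖w‖ := by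
    rw [norm_sq_formula a₁ a₂ (-u) (by simp [hure]) (by simp [hun]),
      inner_neg_right, hinner_u]; ring
  constructor
  · intro I hI
    obtain ⟨hIre, hIn⟩ := imunit_re_norm hI
    have hfI := norm_sq_formula a₁ a₂ I hIre hIn
    have hCS : ⟪w, I⟫ ≤ ‖w‖ := by
      calc ⟪w, I⟫ ≤ ‖w‖ * ‖I‖ := real_inner_le_norm w I
        _ = ‖w‖ := by rw [hIn, mul_one]
    have hle2 : ‖a₁ + I * a₂‖ ^ 2 ≤ ‖a₁ + u * a₂‖ ^ 2 := by
      rw [hfI, hfu]; linarith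
    have hle : ‖a₁ + I * a₂‖ ≤ ‖a₁ + u * a₂‖ :=
      le_of_pow_le_pow_left₀ two_ne_zero (norm_nonneg _) hle2
    refine ⟨hle, fun heq => ?_⟩
    have h2 : ⟪w, I⟫ = ‖w‖ * ‖I‖ := by
      rw [hIn, mul_one]
      have : ‖a₁ + I * a₂‖ ^ 2 = ‖a₁ + u * a₂‖ ^ 2 := by rw [heq]
      rw [hfI, hfu] at this; linarith
    have h3 := inner_eq_norm_mul_iff_real.mp h2
    rw [hIn, one_smul] at h3
    have h4 := congrArg (fun x : ℍ[ℝ] => ‖w‖⁻¹ • x) h3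
    simp only [smul_smul, inv_mul_cancel₀ hwpos.ne', one_smul] at h4
    exact h4.symm
  · intro I hI
    obtain ⟨hIre, hIn⟩ := imunit_re_norm hI
    have hfI := norm_sq_formula a₁ a₂ I hIre hIn
    have hCS : -‖w‖ ≤ ⟪w, I⟫ := by
      have := abs_real_inner_le_norm w I
      rw [hIn, mul_one] at this
      linarith [neg_abs_le ⟪w, I⟫]
    have hle2 : ‖a₁ + (-u) * a₂‖ ^ 2 ≤ ‖a₁ + I * a₂‖ ^ 2 := by
      rw [hfI, hfnu]; linarith
    have hle : ‖a₁ + (-u) * a₂‖ ≤ ‖a₁ + I * a₂‖ :=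
      le_of_pow_le_pow_left₀ two_ne_zero (norm_nonneg _) hle2
    refine ⟨hle, fun heq => ?_⟩
    have h2 : ⟪w, -I⟫ = ‖w‖ * ‖(-I)‖ := by
      rw [norm_neg, hIn, mul_one, inner_neg_right]
      have : ‖a₁ + I * a₂‖ ^ 2 = ‖a₁ + (-u) * a₂‖ ^ 2 := by rw [heq]
      rw [hfI, hfnu] at this; linarith
    have h3 := inner_eq_norm_mul_iff_real.mp h2
    rw [norm_neg, hIn, one_smul] at h3
    have h4 := congrArg (fun x : ℍ[ℝ] => ‖w‖⁻¹ • x) h3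
    simp only [smul_smul, inv_mul_cancel₀ hwpos.ne', one_smul] at h4
    rw [hu, h4, neg_neg]
end

section
/- Let a₁, a₂ ∈ ℍ with a₁ * conj a₂ ∈ ℝ. Then the function I ↦ ‖a₁ + I*a₂‖ is constant on the set of imaginary units {I ∈ ℍ | I² = -1}. -/
open Quaternion

lemma imag_unit_re {I : ℍ[ℝ]} (h : I ^ 2 = -1) : I.re = 0 := by
  rw [Quaternion.ext_iff] at h
  simp [sq, Quaternion.re_mul, Quaternion.imI_mul, Quaternion.imJ_mul,
    Quaternion.imK_mul] at h
  obtain ⟨h1, h2, h3, h4⟩ := h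
  nlinarith [sq_nonneg I.re, sq_nonneg I.imI, sq_nonneg I.imJ, sq_nonneg I.imK,
    sq_nonneg (I.re * I.imI), sq_nonneg (I.re * I.imJ), sq_nonneg (I.re * I.imK)]

lemma imag_unit_star {I : ℍ[ℝ]} (h : I ^ 2 = -1) : star I = -I := by
  have h0 := imag_unit_re h
  ext <;> simp [h0]

/-- If `a₁ conj a₂` is real, then `I ↦ ‖a₁ + I a₂‖` is constant on the imaginary units. -/
theorem modulus_constant_on_sphere (a₁ a₂ : ℍ[ℝ])
    (hv : ∃ r : ℝ, a₁ * star a₂ = (r : ℍ[ℝ])) :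
    ∀ I J : ℍ[ℝ], I ^ 2 = -1 → J ^ 2 = -1 → ‖a₁ + I * a₂‖ = ‖a₁ + J * a₂‖ := by
  obtain ⟨r, hr⟩ := hv
  have key : ∀ I : ℍ[ℝ], I ^ 2 = -1 →
      normSq (a₁ + I * a₂) = normSq a₁ + normSq a₂ := by
    intro I hI
    have hsI : star I = -I := imag_unit_star hI
    have hII : I * -I = 1 := by rw [mul_neg, ← sq, hI, neg_neg]
    have h21 : a₂ * star a₁ = (r : ℍ[ℝ]) := by
      have := congrArg star hr
      simpa using this
    have expand : (((normSq (a₁ + I * a₂) : ℝ)) : ℍ[ℝ])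
        = (((normSq a₁ + normSq a₂ : ℝ)) : ℍ[ℝ]) := by
      rw [← Quaternion.self_mul_star]
      have step : (a₁ + I * a₂) * star (a₁ + I * a₂)
          = a₁ * star a₁ + (a₁ * star a₂) * star I + I * (a₂ * star a₁)
            + I * ((a₂ * star a₂) * star I) := by
        rw [star_add, star_mul]; noncomm_ring
      rw [step, hr, h21, Quaternion.self_mul_star, Quaternion.self_mul_star, hsI]
      have e1 : I * (((normSq a₂ : ℝ) : ℍ[ℝ]) * -I) = ((normSq a₂ : ℝ) : ℍ[ℝ]) := by
        rw [(Quaternion.coe_commute (normSq a₂) (-I)).eq, ← mul_assoc, hII, one_mul]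
      have e2 : I * ((r : ℝ) : ℍ[ℝ]) = ((r : ℝ) : ℍ[ℝ]) * I :=
        ((Quaternion.coe_commute r I).eq).symm
      rw [e1, e2]
      push_cast
      noncomm_ring
    exact Quaternion.coe_injective expand
  intro I J hI hJ
  have h2 : ‖a₁ + I * a₂‖ * ‖a₁ + I * a₂‖ = ‖a₁ + J * a₂‖ * ‖a₁ + J * a₂‖ := by
    rw [← Quaternion.normSq_eq_norm_mul_self, ← Quaternion.normSq_eq_norm_mul_self,
      key I hI, key J hJ]
  exact (mul_self_inj (norm_nonneg _) (norm_nonneg _)).mp h2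
end

section
/- For the quaternionic polynomial f(x) = x², the image f(B) of the open unit ball B = {x ∈ ℍ : ‖x - i‖ < 1} centered at i does not contain any point of ℂ_k \ ℝ = {α + βk : β ≠ 0}; consequently f(i) = -1 is not an interior point of f(B), so x ↦ x² is not an open map on ℍ. -/
open Quaternion Topology

/-!
Squaring keeps a quaternion in its own slice: the imaginary part of `x²` is `2 (re x) (im x)`.
So if `x²` has a nonzero `k`-component and no `i`-component, then `re x ≠ 0` and hence `x` has no
`i`-component either, i.e. `x ∈ ℂ_k`; but every point of `ℂ_k` is at distance at least `1` from `i`.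
The points `-1 + t k` with `t ≠ 0` therefore lie outside the image of the ball while accumulating at
`i² = -1`.
-/

def qi : ℍ[ℝ] := ⟨0, 1, 0, 0⟩

def qk : ℍ[ℝ] := ⟨0, 0, 0, 1⟩

namespace Quaternion

variable {R : Type*} [CommRing R]

theorem imI_sq (x : ℍ[R]) : (x ^ 2).imI = 2 * x.re * x.imI := by
  rw [sq, imI_mul]; ring

theorem imK_sq (x : ℍ[R]) : (x ^ 2).imK = 2 * x.re * x.imK := by
  rw [sq, imK_mul]; ring

theorem imI_eq_zero_of_imI_sq_eq_zero [NoZeroDivisors R] {x : ℍ[R]} (hI : (x ^ 2).imI = 0)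
    (hK : (x ^ 2).imK ≠ 0) : x.imI = 0 := by
  rw [imI_sq] at hI
  rw [imK_sq] at hK
  exact (mul_eq_zero.1 hI).resolve_left (left_ne_zero_of_mul hK)

end Quaternion

@[simp] theorem qi_re : qi.re = 0 := rfl
@[simp] theorem qi_imI : qi.imI = 1 := rfl
@[simp] theorem qi_imJ : qi.imJ = 0 := rfl
@[simp] theorem qi_imK : qi.imK = 0 := rfl
@[simp] theorem qk_imI : qk.imI = 0 := rfl
@[simp] theorem qk_imK : qk.imK = 1 := rfl

theorem qi_sq : qi ^ 2 = -1 := by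
  ext <;> simp [sq]

theorem one_le_dist_qi_of_imI_eq_zero {x : ℍ[ℝ]} (hx : x.imI = 0) : 1 ≤ dist x qi := by
  have h : 1 ≤ dist x qi ^ 2 := by
    rw [dist_eq_norm, sq, ← normSq_eq_norm_mul_self, normSq_def']
    simp only [re_sub, imI_sub, imJ_sub, imK_sub, qi_re, qi_imI, qi_imJ, qi_imK, hx]
    nlinarith
  exact (one_le_sq_iff₀ dist_nonneg).1 h

theorem notMem_interior_of_add_smul_notMem {E : Type*} [AddCommGroup E] [Module ℝ E]
    [TopologicalSpace E] [ContinuousAdd E] [ContinuousSMul ℝ E] {s : Set E} {a v : E}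
    (h : ∀ t : ℝ, t ≠ 0 → a + t • v ∉ s) : a ∉ interior s := by
  intro ha
  have hline : Filter.Tendsto (fun t : ℝ => a + t • v) (𝓝[≠] 0) (𝓝 a) := by
    have : Continuous (fun t : ℝ => a + t • v) := by fun_prop
    simpa using (this.tendsto 0).mono_left nhdsWithin_le_nhds
  obtain ⟨t, hts, ht⟩ :=
    ((hline.eventually (mem_interior_iff_mem_nhds.1 ha)).and self_mem_nhdsWithin).exists
  exact h t ht hts

/-- The image of the unit ball centered at `i` under `x ↦ x²` misses `ℂ_k \ ℝ`; hence
`i² = -1` is not interior to that image and `x ↦ x²` is not an open map on `ℍ`. -/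
theorem sq_not_open_map :
    (∀ α β : ℝ, β ≠ 0 →
        (α : ℍ[ℝ]) + β • qk ∉ (fun x : ℍ[ℝ] => x ^ 2) '' Metric.ball qi 1) ∧
    qi ^ 2 ∉ interior ((fun x : ℍ[ℝ] => x ^ 2) '' Metric.ball qi 1) ∧
    ¬ IsOpenMap (fun x : ℍ[ℝ] => x ^ 2) := by
  have hslice : ∀ α β : ℝ, β ≠ 0 →
      (α : ℍ[ℝ]) + β • qk ∉ (fun x : ℍ[ℝ] => x ^ 2) '' Metric.ball qi 1 := by
    rintro α β hβ ⟨x, hx, hsq⟩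
    have hI : (x ^ 2).imI = 0 := by simp [hsq]
    have hK : (x ^ 2).imK ≠ 0 := by simpa [hsq] using hβ
    exact (one_le_dist_qi_of_imI_eq_zero (imI_eq_zero_of_imI_sq_eq_zero hI hK)).not_gt hx
  have hint : qi ^ 2 ∉ interior ((fun x : ℍ[ℝ] => x ^ 2) '' Metric.ball qi 1) :=
    notMem_interior_of_add_smul_notMem (v := qk) fun t ht => by
      simpa [qi_sq] using hslice (-1) t ht
  refine ⟨hslice, hint, fun hopen => hint ?_⟩
  rw [(hopen _ Metric.isOpen_ball).interior_eq]
  exact ⟨qi, Metric.mem_ball_self one_pos, rfl⟩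
end
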